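/- Under perfect alignment of feature distributions, the adaptation bound collapses to the joint-error term: if g : X → Z is a measurable feature generator with g#P_s = g#P_t, then for every h ∈ H and every h* ∈ H, ε_t(h∘g) ≤ ε_s(h∘g) + ε_s(h*∘g) + ε_t(h*∘g), where ε_s and ε_t denote the source and target expected errors of the composed classifier. -/

import Mathlib

open MeasureTheory

/-! Both errors of `h ∘ g` are compared with those of `h* ∘ g` by the triangle inequality for
disagreement probabilities. The disagreement event of `h ∘ g` and `h* ∘ g` is a preimage under `g`,
so under `g#P_s = g#P_t` it has the same probability for both measures, which lets the target
disagreement be replaced by the source one. -/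

theorem measureReal_setOf_ne_le_add {X β : Type*} [MeasurableSpace X] (μ : Measure X)
    [IsFiniteMeasure μ] (a b c : X → β) :
    μ.real {x | a x ≠ c x} ≤ μ.real {x | a x ≠ b x} + μ.real {x | b x ≠ c x} := by
  refine (measureReal_mono fun x (hac : a x ≠ c x) => ?_).trans (measureReal_union_le _ _)
  by_cases hab : a x = b x
  · exact Or.inr (show b x ≠ c x from hab ▸ hac)
  · exact Or.inl hab

theorem measureReal_preimage_eq_of_map_eq {X Z : Type*} [MeasurableSpace X] [MeasurableSpace Z]
    {μ ν : Measure X} {g : X → Z} (hg : Measurable g) (hmap : μ.map g = ν.map g)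
    {s : Set Z} (hs : MeasurableSet s) : μ.real (g ⁻¹' s) = ν.real (g ⁻¹' s) := by
  rw [← map_measureReal_apply hg hs, hmap, map_measureReal_apply hg hs]

theorem target_error_bound_of_aligned_general
    {X Z : Type*} [MeasurableSpace X] [MeasurableSpace Z]
    (Ps Pt : Measure X) [IsProbabilityMeasure Ps] [IsProbabilityMeasure Pt]
    (fs ft : X → Bool)
    (g : X → Z) (hg : Measurable g)
    (halign : Ps.map g = Pt.map g)
    (H : Set (Z → Bool))
    (hHmeas : ∀ h ∈ H, Measurable h)
    (h : Z → Bool) (hh : h ∈ H)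
    (hstar : Z → Bool) (hhstar : hstar ∈ H) :
    (Pt {x | h (g x) ≠ ft x}).toReal ≤
      (Ps {x | h (g x) ≠ fs x}).toReal
      + (Ps {x | hstar (g x) ≠ fs x}).toReal
      + (Pt {x | hstar (g x) ≠ ft x}).toReal := by
  simp only [← measureReal_def]
  have hdisagree : Pt.real {x | h (g x) ≠ hstar (g x)} = Ps.real {x | h (g x) ≠ hstar (g x)} :=
    measureReal_preimage_eq_of_map_eq hg halign.symm
      (measurableSet_eq_fun (hHmeas h hh) (hHmeas hstar hhstar)).compl
  have htarget := measureReal_setOf_ne_le_add Pt (fun x => h (g x)) (fun x => hstar (g x)) ft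
  have hsource : Ps.real {x | h (g x) ≠ hstar (g x)} ≤
      Ps.real {x | h (g x) ≠ fs x} + Ps.real {x | hstar (g x) ≠ fs x} := by
    simpa only [ne_comm] using
      measureReal_setOf_ne_le_add Ps (fun x => h (g x)) fs (fun x => hstar (g x))
  linarith

/-- Under perfect alignment of the feature distributions (`g#P_s = g#P_t`), the
adaptation bound collapses to the joint-error term: for every `h ∈ H` and
`h* ∈ H`, `ε_t(h∘g) ≤ ε_s(h∘g) + ε_s(h*∘g) + ε_t(h*∘g)`. -/
theorem target_error_bound_of_aligned
    {X Z : Type*} [MeasurableSpace X] [MeasurableSpace Z]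
    (Ps Pt : Measure X) [IsProbabilityMeasure Ps] [IsProbabilityMeasure Pt]
    (fs ft : X → Bool) (hfs : Measurable fs) (hft : Measurable ft)
    (g : X → Z) (hg : Measurable g)
    (halign : Ps.map g = Pt.map g)
    (H : Set (Z → Bool)) (hHne : H.Nonempty)
    (hHmeas : ∀ h ∈ H, Measurable h)
    (h : Z → Bool) (hh : h ∈ H)
    (hstar : Z → Bool) (hhstar : hstar ∈ H) :
    (Pt {x | h (g x) ≠ ft x}).toReal ≤
      (Ps {x | h (g x) ≠ fs x}).toReal
      + (Ps {x | hstar (g x) ≠ fs x}).toReal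
      + (Pt {x | hstar (g x) ≠ ft x}).toReal :=
  target_error_bound_of_aligned_general Ps Pt fs ft g hg halign H hHmeas h hh hstar hhstar
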